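/- arXiv:1203.6157 — 2 statements merged into one kernel-verified Lean document; each statement's English description precedes it below -/
import Mathlib

section
/- In RST, if ∀y₁…∀yₙ ∃!x φ is provable and φ ≻_RST {x}, then the term ιxφ := ⋂{x | φ} provably denotes that unique set: RST proves φ[x ↦ ιxφ]. -/
theorem inter_eq_of_mem_iff_eq {M : Type*} {mem : M → M → Prop} {inter : M → M}
    (hinter : ∀ t x : M,
      mem x (inter t) ↔ (∃ y, mem y t ∧ mem x y) ∧ ∀ y, mem y t → mem x y)
    (hext : ∀ x y : M, (∀ z, mem z x ↔ mem z y) → x = y)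
    {t a : M} (ht : ∀ y, mem y t ↔ y = a) :
    inter t = a :=
  hext _ _ fun z => by simp only [hinter, ht, exists_eq_left, forall_eq, and_self]

/-- In RST, if `∃!x φ` is provable (for all parameter values) and `φ ≻_RST {x}`, then the
term `ιxφ := ⋂{x ∣ φ}` denotes that unique set: RST proves `φ[x ↦ ιxφ]`.
(Stated semantically: `P` interprets `φ`, `CP` interprets the legal term `{x ∣ φ}`, and
`inter` interprets `⋂`; under the comprehension instances and extensionality, if there
is a unique `x` with `P x`, then `P (inter CP)`.) -/
theorem iota_denotes_unique (M : Type*) (mem : M → M → Prop)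
    (P : M → Prop) (CP : M) (inter : M → M)
    (hCP : ∀ x : M, mem x CP ↔ P x)
    (hinter : ∀ t x : M,
      mem x (inter t) ↔ (∃ y, mem y t ∧ mem x y) ∧ ∀ y, mem y t → mem x y)
    (hext : ∀ x y : M, (∀ z, mem z x ↔ mem z y) → x = y)
    (huniq : ∃! x : M, P x) :
    P (inter CP) := by
  obtain ⟨a, ha, hunique⟩ := huniq
  have hCP_singleton : ∀ y, mem y CP ↔ y = a := fun y =>
    (hCP y).trans ⟨hunique y, fun hy => hy ▸ ha⟩
  rwa [inter_eq_of_mem_iff_eq hinter hext hCP_singleton]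
end

section
/- In a theory with the β-principle and the definition λx∈s.t := {⟨x,t⟩ | x∈s} and function application f(a) := ιy.∃z∃v(z∈f ∧ v∈z ∧ y∈v ∧ z=⟨a,y⟩), one can prove: a ∈ s → (λx∈s.t)(a) = t[x ↦ a]. -/
/-- In a theory with the β-principle, `λx∈s.t := {⟨x,t⟩ ∣ x ∈ s}` and
`f(a) := ιy.∃z∃v(z ∈ f ∧ v ∈ z ∧ y ∈ v ∧ z = ⟨a,y⟩)`, one can prove
`a ∈ s → (λx∈s.t)(a) = t[x ↦ a]`.  (Stated semantically: `up` is unordered pairing,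
`op a b := {{a},{a,b}}`, `inter` is `⋂`, `lam s f` interprets `λx∈s.t` where `f`
interprets `x ↦ t`, and `sel f a` interprets the class term defining application;
all are assumed to satisfy their comprehension instances, plus extensionality.) -/
theorem lambda_beta (M : Type*) (mem : M → M → Prop)
    (up : M → M → M) (inter : M → M) (lam : M → (M → M) → M) (sel : M → M → M)
    (hup : ∀ a b x : M, mem x (up a b) ↔ (x = a ∨ x = b))
    (hinter : ∀ t x : M,
      mem x (inter t) ↔ (∃ y, mem y t ∧ mem x y) ∧ ∀ y, mem y t → mem x y)
    (hlam : ∀ (s : M) (f : M → M) (y : M),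
      mem y (lam s f) ↔ ∃ x, mem x s ∧ y = up (up x x) (up x (f x)))
    (hsel : ∀ (g a y : M),
      mem y (sel g a) ↔ ∃ z v, mem z g ∧ mem v z ∧ mem y v ∧ z = up (up a a) (up a y))
    (hext : ∀ x y : M, (∀ z, mem z x ↔ mem z y) → x = y) :
    ∀ (s : M) (f : M → M) (a : M), mem a s → inter (sel (lam s f) a) = f a := by
  intro s f a ha
  have mems : ∀ u v c d : M, up u v = up c d → (u = c ∨ u = d) ∧ (v = c ∨ v = d) := by
    intro u v c d h
    constructor
    · exact (hup c d u).mp (h ▸ (hup u v u).mpr (Or.inl rfl))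
    · exact (hup c d v).mp (h ▸ (hup u v v).mpr (Or.inr rfl))
  have key : ∀ x p q : M, up (up x x) (up x p) = up (up a a) (up a q) → x = a ∧ p = q := by
    intro x p q h
    have hmem : ∀ z, mem z (up (up a a) (up a q)) ↔ (z = up x x ∨ z = up x p) := by
      intro z; rw [← h]; exact hup _ _ z
    have h1 : up a a = up x x ∨ up a a = up x p :=
      (hmem _).mp ((hup _ _ _).mpr (Or.inl rfl))
    have h2 : up a q = up x x ∨ up a q = up x p :=
      (hmem _).mp ((hup _ _ _).mpr (Or.inr rfl))
    have h3 : up x p = up a a ∨ up x p = up a q := by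
      have hh := (hup (up x x) (up x p) (up x p)).mpr (Or.inr rfl)
      rw [h] at hh
      exact (hup _ _ _).mp hh
    rcases h1 with h1 | h1
    · have hxa : x = a := by rcases (mems _ _ _ _ h1.symm).1 with h' | h' <;> exact h'
      refine ⟨hxa, ?_⟩
      rcases h2 with h2 | h2
      · have hqx : q = x := by rcases (mems _ _ _ _ h2).2 with h' | h' <;> exact h'
        rcases h3 with h3 | h3
        · have hpa : p = a := by rcases (mems _ _ _ _ h3).2 with h' | h' <;> exact h'
          exact hpa.trans (hxa ▸ hqx).symm
        · rcases (mems _ _ _ _ h3).2 with hp | hp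
          · exact hp.trans (hxa ▸ hqx).symm
          · exact hp
      · rcases (mems _ _ _ _ h2).2 with hq | hq
        · rcases (mems _ _ _ _ h2.symm).2 with hp | hp
          · exact hp.trans (hxa ▸ hq).symm
          · exact hp
        · exact hq.symm
    · have hxa : x = a := by rcases (mems _ _ _ _ h1.symm).1 with h' | h' <;> exact h'
      have hpa : p = a := by rcases (mems _ _ _ _ h1.symm).2 with h' | h' <;> exact h'
      refine ⟨hxa, ?_⟩
      rcases h2 with h2 | h2
      · have hqx : q = x := by rcases (mems _ _ _ _ h2).2 with h' | h' <;> exact h'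
        exact hpa.trans (hqx.trans hxa).symm
      · rcases (mems _ _ _ _ h2).2 with hq | hq
        · exact hpa.trans (hq.trans hxa).symm
        · exact hq.symm
  have hsel_iff : ∀ y, mem y (sel (lam s f) a) ↔ y = f a := by
    intro y
    constructor
    · intro hy
      rcases (hsel _ _ _).mp hy with ⟨z, v, hz, hvz, hyv, hzeq⟩
      rcases (hlam _ _ _).mp hz with ⟨x, hxs, hzeq'⟩
      have := key x (f x) y (hzeq'.symm.trans hzeq)
      rcases this with ⟨hxa, hfy⟩
      rw [← hfy, hxa]
    · intro hy
      refine (hsel _ _ _).mpr ⟨up (up a a) (up a (f a)), up a (f a), ?_, ?_, ?_, ?_⟩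
      · exact (hlam _ _ _).mpr ⟨a, ha, rfl⟩
      · exact (hup _ _ _).mpr (Or.inr rfl)
      · exact (hup _ _ _).mpr (Or.inr hy)
      · rw [hy]
  apply hext
  intro w
  rw [hinter]
  constructor
  · rintro ⟨-, hall⟩
    exact hall _ ((hsel_iff _).mpr rfl)
  · intro hw
    exact ⟨⟨f a, (hsel_iff _).mpr rfl, hw⟩, fun y hy => (hsel_iff y).mp hy ▸ hw⟩
end
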